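/- arXiv:1301.3766 — 2 statements merged into one kernel-verified Lean document; each statement's English description precedes it below -/
import Mathlib

section
/- Let (M_n) and (L_n) be sequences of nonnegative integers with L₀ = M₀ = 0 and suppose for all n: (i) if J_n = 1 then L_{n+1} ≤ max{L_n - 1, 0} and M_{n+1} = max{M_n - 1, 0}; (ii) if M_n ≥ l₀ and 1 < J_n ≤ M_n then M_{n+1} = M_n and L_{n+1} ≤ max{J_n, L_n}; (iii) if J_n > M_n ≥ l₀ then M_{n+1} = J_n and L_{n+1} ≤ J_n; (iv) if M_n < l₀ then M_{n+1} = l₀ + J_n and L_{n+1} ≤ L_n + J_n. Then L_n ≤ M_n for all n ≥ 0. -/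
/-- The coupling `(M_n)` dominates the history-height process `(L_n)`: with
`L₀ = M₀ = 0` and the recursive (in)equalities driven by `(J_n)`, one has
`L_n ≤ M_n` for all `n`. -/
theorem history_height_dominated (l₀ : ℕ) (hl₀ : 1 ≤ l₀)
    (J L M : ℕ → ℕ) (hJ : ∀ n, 1 ≤ J n)
    (hL0 : L 0 = 0) (hM0 : M 0 = 0)
    (h1 : ∀ n, J n = 1 → L (n + 1) ≤ max (L n - 1) 0 ∧ M (n + 1) = max (M n - 1) 0)
    (h2 : ∀ n, l₀ ≤ M n → 1 < J n → J n ≤ M n →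
      M (n + 1) = M n ∧ L (n + 1) ≤ max (J n) (L n))
    (h3 : ∀ n, l₀ ≤ M n → M n < J n → M (n + 1) = J n ∧ L (n + 1) ≤ J n)
    (h4 : ∀ n, M n < l₀ → M (n + 1) = l₀ + J n ∧ L (n + 1) ≤ L n + J n)
    (h5 : ∀ n, L n < J n → L (n + 1) ≤ J n) :
    ∀ n, L n ≤ M n := by
  intro n
  induction n with
  | zero => omega
  | succ n ih =>
    by_cases hJ1 : J n = 1
    · obtain ⟨hLa, hMa⟩ := h1 n hJ1
      omega
    · by_cases hMl : M n < l₀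
      · obtain ⟨hMa, hLa⟩ := h4 n hMl
        omega
      · push_neg at hMl
        by_cases hJM : J n ≤ M n
        · obtain ⟨hMa, hLa⟩ := h2 n hMl (by have := hJ n; omega) hJM
          simp only [le_max_iff] at hLa
          omega
        · push_neg at hJM
          obtain ⟨hMa, hLa⟩ := h3 n hMl hJM
          omega
end

section
/- A mean-zero random walk on ℤ with i.i.d. increments having finite second moment and positive variance is recurrent: it returns to its starting point infinitely often almost surely. -/
/-!
The expected number of returns `∑ₙ P(Sₙ = 0)` is infinite. By Chebyshev, for `n ≤ N` the walk
lies in `[-K, K]` with probability at least `1/2` once `K ≍ √N`, while decomposing at the first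
visit shows that no point has more expected visits than `0`; hence
`∑_{n ≤ N} P(Sₙ = 0) ≳ N / K ≍ √N`. Decomposing at the last visit to `0` before time `N` gives
`P(no return during [1, N]) · ∑_{n ≤ N} P(Sₙ = 0) ≤ 1`, so the walk returns to `0` almost surely,
and by the Markov property at each time it returns infinitely often.
-/

open MeasureTheory ProbabilityTheory Finset Filter
open scoped ENNReal

namespace RandomWalk

variable {Ω G : Type*}

section PartialSum

variable [AddCommMonoid G]

def partialSum (f : ℕ → G) (n : ℕ) : G := ∑ i ∈ range n, f i

lemma partialSum_add (f : ℕ → G) (m k : ℕ) :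
    partialSum f (m + k) = partialSum f m + partialSum (fun i ↦ f (m + i)) k :=
  sum_range_add f m k

variable [MeasurableSpace Ω]

noncomputable def expectedVisits (X : ℕ → Ω → G) (μ : Measure Ω) (x : G) (N : ℕ) : ℝ≥0∞ :=
  ∑ n ∈ range (N + 1), μ {ω | partialSum (X · ω) n = x}

lemma tsum_eq_iSup_expectedVisits {μ : Measure Ω} {X : ℕ → Ω → G} (x : G) :
    ∑' n, μ {ω | partialSum (X · ω) n = x} = ⨆ N, expectedVisits X μ x N :=
  ENNReal.tsum_eq_iSup_nat' (tendsto_add_atTop_nat 1)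

end PartialSum

lemma sum_range_convolution_le (N : ℕ) (a b : ℕ → ℝ≥0∞) :
    ∑ n ∈ range (N + 1), ∑ m ∈ range (n + 1), a m * b (n - m)
      ≤ (∑ m ∈ range (N + 1), a m) * ∑ k ∈ range (N + 1), b k := by
  rw [sum_range_diag_flip (N + 1) fun m k ↦ a m * b k, sum_mul]
  gcongr with m
  rw [← mul_sum]
  gcongr
  exact Nat.sub_le _ _

section Measurability

variable [MeasurableSpace G]

abbrev sigmaOf (X : ℕ → Ω → G) (S : Set ℕ) : MeasurableSpace Ω :=
  ⨆ i ∈ S, MeasurableSpace.comap (X i) inferInstance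

lemma measurable_sigmaOf {X : ℕ → Ω → G} {S : Set ℕ} {i : ℕ} (hi : i ∈ S) :
    Measurable[sigmaOf X S] (X i) :=
  Measurable.of_comap_le (le_iSup₂ (f := fun i (_ : i ∈ S) ↦ MeasurableSpace.comap (X i) _) i hi)

variable [AddCommMonoid G] [MeasurableAdd₂ G]

lemma measurable_partialSum (n : ℕ) : Measurable fun f : ℕ → G ↦ partialSum f n :=
  Finset.measurable_sum _ fun i _ ↦ measurable_pi_apply i

lemma measurable_partialSum_sigmaOf {X : ℕ → Ω → G} {j m : ℕ} (hj : j ≤ m) :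
    Measurable[sigmaOf X (Set.Iio m)] fun ω ↦ partialSum (X · ω) j :=
  Finset.measurable_sum _ fun _ hi ↦ measurable_sigmaOf ((mem_range.1 hi).trans_le hj)

lemma measurableSet_forall_partialSum_ne [MeasurableSingletonClass G] (p : ℕ → Prop) (x : G) :
    MeasurableSet {f : ℕ → G | ∀ n, p n → partialSum f n ≠ x} :=
  measurableSet_setOfPred.2 <| .forall fun n ↦ .forall fun _ ↦
    (measurableSet_setOfPred.1 (measurable_partialSum n (measurableSet_singleton x))).not

lemma measurableSet_firstVisit [MeasurableSingletonClass G] {X : ℕ → Ω → G} (x : G) (m : ℕ) :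
    MeasurableSet[sigmaOf X (Set.Iio m)]
      {ω | partialSum (X · ω) m = x ∧ ∀ j < m, partialSum (X · ω) j ≠ x} := by
  have hbefore : {ω | ∀ j < m, partialSum (X · ω) j ≠ x}
      = ⋂ j ∈ Set.Iio m, {ω | partialSum (X · ω) j = x}ᶜ := by
    ext; simp
  rw [Set.ofPred_and, hbefore]
  exact (measurable_partialSum_sigmaOf le_rfl (measurableSet_singleton x)).inter <|
    .biInter (Set.to_countable _) fun j hj ↦
      (measurable_partialSum_sigmaOf (le_of_lt hj) (measurableSet_singleton x)).compl

end Measurability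

variable [MeasurableSpace Ω] [MeasurableSpace G] {μ : Measure Ω}

structure IsIID (X : ℕ → Ω → G) (μ : Measure Ω) : Prop where
  measurable : ∀ i, Measurable (X i)
  indep : iIndepFun X μ
  identDistrib : ∀ i, IdentDistrib (X i) (X 0) μ μ

namespace IsIID

variable {X : ℕ → Ω → G}

lemma comp {H : Type*} [MeasurableSpace H] (h : IsIID X μ) {g : G → H} (hg : Measurable g) :
    IsIID (fun i ↦ g ∘ X i) μ where
  measurable i := hg.comp (h.measurable i)
  indep := h.indep.comp (fun _ ↦ g) fun _ ↦ hg
  identDistrib i := (h.identDistrib i).comp hg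

lemma identDistrib_shift (h : IsIID X μ) (m : ℕ) :
    IdentDistrib (fun ω i ↦ X (m + i) ω) (fun ω i ↦ X i ω) μ μ where
  aemeasurable_fst := (measurable_pi_lambda _ fun _ ↦ h.measurable _).aemeasurable
  aemeasurable_snd := (measurable_pi_lambda _ h.measurable).aemeasurable
  map_eq := by
    rw [(h.indep.precomp (add_right_injective m)).map_fun_eq_infinitePi_map
      (fun _ ↦ h.measurable _), h.indep.map_fun_eq_infinitePi_map h.measurable]
    simp only [fun i ↦ (h.identDistrib i).map_eq]

lemma sigmaOf_le (h : IsIID X μ) (S : Set ℕ) : sigmaOf X S ≤ ‹MeasurableSpace Ω› :=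
  iSup₂_le fun i _ ↦ (h.measurable i).comap_le

/-- Markov property of the walk at a deterministic time `m`. -/
lemma measure_inter_shift_preimage (h : IsIID X μ) {m : ℕ} {A : Set Ω}
    (hA : MeasurableSet[sigmaOf X (Set.Iio m)] A) {F : Set (ℕ → G)} (hF : MeasurableSet F) :
    μ (A ∩ (fun ω i ↦ X (m + i) ω) ⁻¹' F) = μ A * μ ((fun ω i ↦ X i ω) ⁻¹' F) := by
  have hindep : Indep (sigmaOf X (Set.Iio m)) (sigmaOf X (Set.Ici m)) μ :=
    indep_iSup_of_disjoint (fun i ↦ (h.measurable i).comap_le) h.indep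
      (Set.Iio_disjoint_Ici le_rfl)
  have hfuture : Measurable[sigmaOf X (Set.Ici m)] (fun ω i ↦ X (m + i) ω) :=
    (@measurable_pi_iff Ω ℕ (fun _ ↦ G) (sigmaOf X (Set.Ici m)) _ _).mpr fun i ↦
      measurable_sigmaOf (Nat.le_add_right m i)
  rw [(Indep_iff _ _ μ).1 hindep A _ hA (hfuture hF), (h.identDistrib_shift m).measure_mem_eq hF]

lemma measure_le_abs_partialSum_le {Y : ℕ → Ω → ℝ} (h : IsIID Y μ) [IsProbabilityMeasure μ]
    (hmean : ∫ ω, Y 0 ω ∂μ = 0) (hL2 : MemLp (Y 0) 2 μ) (n : ℕ) {c : ℝ} (hc : 0 < c) :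
    μ {ω | c ≤ |partialSum (Y · ω) n|} ≤ ENNReal.ofReal (n * (∫ ω, Y 0 ω ^ 2 ∂μ) / c ^ 2) := by
  have hL2i (i : ℕ) : MemLp (Y i) 2 μ := (h.identDistrib i).symm.memLp_snd hL2
  have hsum : (∑ i ∈ range n, Y i) = fun ω ↦ partialSum (Y · ω) n := by
    ext ω; simp [partialSum]
  have hmean_sum : μ[∑ i ∈ range n, Y i] = 0 := by
    simp only [hsum, partialSum]
    rw [integral_finsetSum _ fun i _ ↦ (hL2i i).integrable one_le_two]
    exact sum_eq_zero fun i _ ↦ (h.identDistrib i).integral_eq.trans hmean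
  have hvar_sum : variance (∑ i ∈ range n, Y i) μ = n * ∫ ω, Y 0 ω ^ 2 ∂μ := by
    rw [IndepFun.variance_sum (fun i _ ↦ hL2i i) fun i _ j _ hij ↦ h.indep.indepFun hij,
      sum_congr rfl fun i _ ↦ (h.identDistrib i).variance_eq,
      variance_of_integral_eq_zero hL2.aemeasurable hmean]
    simp
  have hcheb := meas_ge_le_variance_div_sq (memLp_finsetSum' (range n) fun i _ ↦ hL2i i) hc
  rw [hmean_sum, hvar_sum, hsum] at hcheb
  simpa using hcheb

end IsIID

section Group

variable [AddCommGroup G] [MeasurableSingletonClass G] [MeasurableAdd₂ G] {X : ℕ → Ω → G}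

namespace IsIID

lemma measure_partialSum_eq_le (h : IsIID X μ) (x : G) (n : ℕ) :
    μ {ω | partialSum (X · ω) n = x} ≤ ∑ m ∈ range (n + 1),
      μ {ω | partialSum (X · ω) m = x ∧ ∀ j < m, partialSum (X · ω) j ≠ x} *
        μ {ω | partialSum (X · ω) (n - m) = 0} := by
  classical
  have hcover : {ω | partialSum (X · ω) n = x} ⊆ ⋃ m ∈ range (n + 1),
      {ω | partialSum (X · ω) m = x ∧ ∀ j < m, partialSum (X · ω) j ≠ x} ∩
        {ω | partialSum (fun i ↦ X (m + i) ω) (n - m) = 0} := by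
    intro ω hn
    have hex : ∃ j, partialSum (X · ω) j = x := ⟨n, hn⟩
    have hle : Nat.find hex ≤ n := Nat.find_min' hex hn
    refine Set.mem_biUnion (mem_range.2 (Nat.lt_succ_of_le hle))
      ⟨⟨Nat.find_spec hex, fun j hj ↦ Nat.find_min hex hj⟩, ?_⟩
    have hsplit := partialSum_add (X · ω) (Nat.find hex) (n - Nat.find hex)
    rw [Nat.add_sub_cancel' hle, hn, Nat.find_spec hex] at hsplit
    exact left_eq_add.1 hsplit
  refine (measure_mono hcover).trans <| (measure_biUnion_finset_le _ _).trans_eq <|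
    sum_congr rfl fun m _ ↦ ?_
  exact h.measure_inter_shift_preimage (measurableSet_firstVisit x m)
    (measurable_partialSum _ (measurableSet_singleton 0))

lemma expectedVisits_le (h : IsIID X μ) [IsProbabilityMeasure μ] (x : G) (N : ℕ) :
    expectedVisits X μ x N ≤ expectedVisits X μ 0 N := by
  set firstVisit : ℕ → Set Ω :=
    fun m ↦ {ω | partialSum (X · ω) m = x ∧ ∀ j < m, partialSum (X · ω) j ≠ x}
  have hdisj : Pairwise (Function.onFun Disjoint firstVisit) := by
    refine pairwise_disjoint_on firstVisit |>.2 fun m m' hm ↦ Set.disjoint_left.2 ?_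
    rintro ω ⟨hxm, -⟩ ⟨-, hbefore⟩
    exact hbefore m hm hxm
  have hmeas (m : ℕ) : MeasurableSet (firstVisit m) :=
    h.sigmaOf_le _ _ (measurableSet_firstVisit x m)
  calc expectedVisits X μ x N
      ≤ ∑ n ∈ range (N + 1), ∑ m ∈ range (n + 1), μ (firstVisit m) *
          μ {ω | partialSum (X · ω) (n - m) = 0} :=
        sum_le_sum fun n _ ↦ h.measure_partialSum_eq_le x n
    _ ≤ (∑ m ∈ range (N + 1), μ (firstVisit m)) * expectedVisits X μ 0 N :=
        sum_range_convolution_le N _ _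
    _ ≤ 1 * expectedVisits X μ 0 N := by
        gcongr
        rw [← measure_biUnion_finset (hdisj.set_pairwise _) fun m _ ↦ hmeas m]
        exact prob_le_one
    _ = expectedVisits X μ 0 N := one_mul _

lemma measure_avoidsZero_mul_expectedVisits_le_one (h : IsIID X μ) [IsProbabilityMeasure μ]
    (N : ℕ) :
    μ {ω | ∀ j ∈ Icc 1 N, partialSum (X · ω) j ≠ 0} * expectedVisits X μ 0 N ≤ 1 := by
  set avoids : ℕ → Set (ℕ → G) := fun k ↦ {f | ∀ j ∈ Icc 1 k, partialSum f j ≠ 0}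
  have havoids (k : ℕ) : MeasurableSet (avoids k) :=
    measurableSet_forall_partialSum_ne (· ∈ Icc 1 k) 0
  set lastVisit : ℕ → Set Ω := fun m ↦
    {ω | partialSum (X · ω) m = 0} ∩ {ω | (fun i ↦ X (m + i) ω) ∈ avoids (N - m)}
  have hdisj : Set.PairwiseDisjoint (range (N + 1) : Set ℕ) lastVisit := by
    have hlt {m m' : ℕ} (hmm' : m < m') (hm' : m' ≤ N) :
        Disjoint (lastVisit m) (lastVisit m') := by
      refine Set.disjoint_left.2 fun ω ⟨hzero, havoid⟩ ⟨hzero', _⟩ ↦ ?_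
      have hsplit := partialSum_add (X · ω) m (m' - m)
      rw [Nat.add_sub_cancel' hmm'.le, hzero', hzero, zero_add] at hsplit
      exact havoid (m' - m) (mem_Icc.2 ⟨by omega, by omega⟩) hsplit.symm
    intro m hm m' hm' hne
    simp only [coe_range, Set.mem_Iio] at hm hm'
    rcases hne.lt_or_gt with hmm' | hmm'
    · exact hlt hmm' (by omega)
    · exact (hlt hmm' (by omega)).symm
  have hmeas (m : ℕ) : MeasurableSet (lastVisit m) :=
    ((measurable_partialSum m).comp (measurable_pi_lambda _ h.measurable)
      (measurableSet_singleton 0)).inter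
      (measurable_pi_lambda _ (fun _ ↦ h.measurable _) (havoids _))
  calc μ {ω | ∀ j ∈ Icc 1 N, partialSum (X · ω) j ≠ 0} * expectedVisits X μ 0 N
      = ∑ m ∈ range (N + 1), μ {ω | partialSum (X · ω) m = 0} * μ {ω | (X · ω) ∈ avoids N} := by
        rw [expectedVisits, mul_comm, sum_mul]
        rfl
    _ ≤ ∑ m ∈ range (N + 1), μ (lastVisit m) := by
        gcongr with m
        have hmono : {ω | (X · ω) ∈ avoids N} ⊆ {ω | (X · ω) ∈ avoids (N - m)} :=
          fun ω hω j hj ↦ hω j (Icc_subset_Icc_right (Nat.sub_le N m) hj)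
        exact (mul_le_mul_right (measure_mono hmono) _).trans_eq (h.measure_inter_shift_preimage
          (measurable_partialSum_sigmaOf le_rfl (measurableSet_singleton 0)) (havoids _)).symm
    _ = μ (⋃ m ∈ range (N + 1), lastVisit m) :=
        (measure_biUnion_finset hdisj fun m _ ↦ hmeas m).symm
    _ ≤ 1 := prob_le_one

lemma measure_neverReturns_eq_zero (h : IsIID X μ) [IsProbabilityMeasure μ]
    (hsum : ∑' n, μ {ω | partialSum (X · ω) n = 0} = ∞) :
    μ {ω | ∀ n, 0 < n → partialSum (X · ω) n ≠ 0} = 0 := by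
  set E := {ω | ∀ n, 0 < n → partialSum (X · ω) n ≠ 0}
  have hE : μ E * ∑' n, μ {ω | partialSum (X · ω) n = 0} ≤ 1 := by
    rw [tsum_eq_iSup_expectedVisits, ENNReal.mul_iSup]
    refine iSup_le fun N ↦ le_trans ?_ (h.measure_avoidsZero_mul_expectedVisits_le_one N)
    gcongr
    exact fun ω hω j hj ↦ hω j (mem_Icc.1 hj).1
  by_contra hne
  rw [hsum, ENNReal.mul_top hne] at hE
  exact ENNReal.top_ne_one (le_antisymm hE le_top)

lemma ae_frequently_partialSum_eq_zero (h : IsIID X μ) [IsProbabilityMeasure μ]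
    (hsum : ∑' n, μ {ω | partialSum (X · ω) n = 0} = ∞) :
    ∀ᵐ ω ∂μ, ∃ᶠ n in atTop, partialSum (X · ω) n = 0 := by
  classical
  set never : Set (ℕ → G) := {f | ∀ n, 0 < n → partialSum f n ≠ 0}
  have hnull (m : ℕ) : μ {ω | (fun i ↦ X (m + i) ω) ∈ never} = 0 := by
    rw [← h.measure_neverReturns_eq_zero hsum]
    exact (h.identDistrib_shift m).measure_mem_eq (measurableSet_forall_partialSum_ne _ 0)
  rw [ae_iff]
  refine measure_mono_null (fun ω hω ↦ ?_) (measure_iUnion_null hnull)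
  simp only [Set.mem_ofPred_eq, not_frequently, eventually_atTop] at hω
  obtain ⟨b, hb⟩ := hω
  -- after the last zero `m` of the walk before `b`, the walk restarted at `m` never returns
  set m := Nat.findGreatest (partialSum (X · ω) · = 0) b
  have hm : partialSum (X · ω) m = 0 :=
    Nat.findGreatest_spec (P := (partialSum (X · ω) · = 0)) (Nat.zero_le b) (sum_range_zero _)
  refine Set.mem_iUnion.2 ⟨m, fun j hj hshift ↦ ?_⟩
  have hzero : partialSum (X · ω) (m + j) = 0 := by rw [partialSum_add, hm, hshift, zero_add]
  rcases le_or_gt b (m + j) with hbj | hbj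
  · exact hb _ hbj hzero
  · exact Nat.findGreatest_is_greatest (Nat.lt_add_of_pos_right hj) hbj.le hzero

end IsIID

end Group

namespace IsIID

variable {X : ℕ → Ω → ℤ}

lemma one_le_two_mul_sum_measure_partialSum_eq (h : IsIID X μ) [IsProbabilityMeasure μ]
    (hmean : ∫ ω, (X 0 ω : ℝ) ∂μ = 0) (hL2 : MemLp (fun ω ↦ (X 0 ω : ℝ)) 2 μ) {n K : ℕ}
    (hK : 0 < K) (hnK : 2 * n * ∫ ω, (X 0 ω : ℝ) ^ 2 ∂μ ≤ K ^ 2) :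
    1 ≤ 2 * ∑ x ∈ Icc (-K : ℤ) K, μ {ω | partialSum (X · ω) n = x} := by
  have htail : μ {ω | (K : ℝ) ≤ |((partialSum (X · ω) n : ℤ) : ℝ)|} ≤ 2⁻¹ := by
    have hcheb := (h.comp (measurable_from_top (f := ((↑) : ℤ → ℝ)))).measure_le_abs_partialSum_le
      hmean hL2 n (Nat.cast_pos.2 hK)
    simp only [Function.comp_apply, partialSum, Int.cast_sum] at hcheb ⊢
    refine hcheb.trans ?_
    rw [← ENNReal.ofReal_ofNat 2, ← ENNReal.ofReal_inv_of_pos two_pos]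
    refine ENNReal.ofReal_le_ofReal ?_
    rw [div_le_iff₀ (by positivity)]
    linarith
  have hcover : Set.univ ⊆ {ω | (K : ℝ) ≤ |((partialSum (X · ω) n : ℤ) : ℝ)|} ∪
      ⋃ x ∈ Icc (-K : ℤ) K, {ω | partialSum (X · ω) n = x} := by
    intro ω _
    by_contra hω
    simp only [Set.mem_union, Set.mem_ofPred_eq, Set.mem_iUnion, mem_Icc, not_or, not_le,
      exists_prop, not_exists, not_and] at hω
    obtain ⟨hlt, hout⟩ := hω
    have hltℤ : |partialSum (X · ω) n| < K := by exact_mod_cast hlt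
    rw [abs_lt] at hltℤ
    exact hout _ ⟨hltℤ.1.le, hltℤ.2.le⟩ rfl
  have hsum : 2⁻¹ ≤ ∑ x ∈ Icc (-K : ℤ) K, μ {ω | partialSum (X · ω) n = x} := by
    rw [← ENNReal.one_sub_inv_two, tsub_le_iff_left]
    calc 1 = μ Set.univ := measure_univ.symm
      _ ≤ _ := (measure_mono hcover).trans (measure_union_le _ _)
      _ ≤ _ := add_le_add htail (measure_biUnion_finset_le _ _)
  calc (1 : ℝ≥0∞) = 2 * 2⁻¹ := (ENNReal.mul_inv_cancel two_ne_zero ENNReal.ofNat_ne_top).symm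
    _ ≤ _ := by gcongr

lemma succ_le_expectedVisits (h : IsIID X μ) [IsProbabilityMeasure μ]
    (hmean : ∫ ω, (X 0 ω : ℝ) ∂μ = 0) (hL2 : MemLp (fun ω ↦ (X 0 ω : ℝ)) 2 μ) {N K : ℕ}
    (hK : 0 < K) (hNK : 2 * N * ∫ ω, (X 0 ω : ℝ) ^ 2 ∂μ ≤ K ^ 2) :
    (N + 1 : ℝ≥0∞) ≤ 2 * (2 * K + 1) * expectedVisits X μ 0 N := by
  have hv : 0 ≤ ∫ ω, (X 0 ω : ℝ) ^ 2 ∂μ := integral_nonneg fun ω ↦ sq_nonneg _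
  have hbulk (n : ℕ) (hn : n ≤ N) :
      1 ≤ 2 * ∑ x ∈ Icc (-K : ℤ) K, μ {ω | partialSum (X · ω) n = x} := by
    refine h.one_le_two_mul_sum_measure_partialSum_eq hmean hL2 hK (le_trans ?_ hNK)
    gcongr
  calc (N + 1 : ℝ≥0∞) = ∑ n ∈ range (N + 1), 1 := by simp
    _ ≤ ∑ n ∈ range (N + 1), 2 * ∑ x ∈ Icc (-K : ℤ) K, μ {ω | partialSum (X · ω) n = x} :=
        sum_le_sum fun n hn ↦ hbulk n (Nat.lt_succ_iff.1 (mem_range.1 hn))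
    _ = 2 * ∑ x ∈ Icc (-K : ℤ) K, expectedVisits X μ x N := by
        rw [← mul_sum, sum_comm]
        rfl
    _ ≤ 2 * ∑ x ∈ Icc (-K : ℤ) K, expectedVisits X μ 0 N := by
        gcongr with x
        exact h.expectedVisits_le x N
    _ = 2 * (2 * K + 1) * expectedVisits X μ 0 N := by
        rw [sum_const, Int.card_Icc, nsmul_eq_mul,
          show (K + 1 - -K : ℤ).toNat = 2 * K + 1 by omega]
        push_cast
        ring

lemma tsum_measure_partialSum_eq_zero_eq_top (h : IsIID X μ) [IsProbabilityMeasure μ]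
    (hmean : ∫ ω, (X 0 ω : ℝ) ∂μ = 0) (hL2 : MemLp (fun ω ↦ (X 0 ω : ℝ)) 2 μ) :
    ∑' n, μ {ω | partialSum (X · ω) n = 0} = ∞ := by
  rw [tsum_eq_iSup_expectedVisits, iSup_eq_top]
  intro b hb
  obtain ⟨k, hk⟩ := ENNReal.exists_nat_gt hb.ne
  set v := ∫ ω, (X 0 ω : ℝ) ^ 2 ∂μ
  have hv : 0 ≤ v := integral_nonneg fun ω ↦ sq_nonneg _
  -- `K ≥ 12 k v` and `N = 6 K k` give `2 N v ≤ K ^ 2` and `k * (2 (2 K + 1)) ≤ N + 1`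
  set K := ⌈12 * (k : ℝ) * v⌉₊ + 1
  have hK : 12 * k * v ≤ K := by
    simp only [K, Nat.cast_add, Nat.cast_one]
    linarith [Nat.le_ceil (12 * (k : ℝ) * v)]
  have hK1 : 1 ≤ K := Nat.le_add_left 1 _
  refine ⟨6 * K * k, hk.trans_le ?_⟩
  have hbound := h.succ_le_expectedVisits hmean hL2 (N := 6 * K * k) hK1 (by
    push_cast
    nlinarith)
  have hcount : k * (2 * (2 * K + 1)) ≤ 6 * K * k + 1 := by nlinarith
  have hc0 : (2 * (2 * K + 1) : ℝ≥0∞) ≠ 0 := by positivity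
  have hctop : (2 * (2 * K + 1) : ℝ≥0∞) ≠ ⊤ := by finiteness
  rw [← ENNReal.mul_le_mul_iff_left hc0 hctop]
  calc (k : ℝ≥0∞) * (2 * (2 * K + 1)) ≤ (6 * K * k : ℕ) + 1 := by exact_mod_cast hcount
    _ ≤ 2 * (2 * K + 1) * expectedVisits X μ 0 (6 * K * k) := hbound
    _ = expectedVisits X μ 0 (6 * K * k) * (2 * (2 * K + 1)) := mul_comm _ _

end IsIID

end RandomWalk

theorem mean_zero_walk_recurrent_general (Ω : Type*) [MeasurableSpace Ω] (μ : Measure Ω)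
    [IsProbabilityMeasure μ] (ξ : ℕ → Ω → ℤ) (hm : ∀ i, Measurable (ξ i))
    (hiid : iIndepFun ξ μ)
    (hident : ∀ i, IdentDistrib (ξ i) (ξ 1) μ μ)
    (hmean : ∫ ω, (ξ 1 ω : ℝ) ∂μ = 0)
    (hL2 : Integrable (fun ω => ((ξ 1 ω : ℝ)) ^ 2) μ) :
    ∀ᵐ ω ∂μ, {n : ℕ | 1 ≤ n ∧ ∑ i ∈ Finset.Icc 1 n, ξ i ω = 0}.Infinite := by
  have hX : RandomWalk.IsIID (fun i ↦ ξ (i + 1)) μ :=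
    ⟨fun i ↦ hm _, hiid.precomp (add_left_injective 1), fun i ↦ hident _⟩
  have hL2' : MemLp (fun ω ↦ (ξ 1 ω : ℝ)) 2 μ :=
    (memLp_two_iff_integrable_sq (measurable_from_top.comp (hm 1)).aestronglyMeasurable).2 hL2
  filter_upwards [hX.ae_frequently_partialSum_eq_zero
    (hX.tsum_measure_partialSum_eq_zero_eq_top hmean hL2')] with ω hω
  have hreindex (n : ℕ) :
      ∑ i ∈ Finset.Icc 1 n, ξ i ω = RandomWalk.partialSum (fun i ↦ ξ (i + 1) ω) n := by
    rw [RandomWalk.partialSum, Finset.range_eq_Ico, Finset.sum_Ico_add' (fun j ↦ ξ j ω), zero_add,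
      Finset.Ico_add_one_right_eq_Icc]
  simp only [hreindex, ← Nat.frequently_atTop_iff_infinite]
  exact (hω.and_eventually (eventually_ge_atTop 1)).mono fun n hn ↦ ⟨hn.2, hn.1⟩

/-- Chung–Fuchs: a mean-zero random walk on `ℤ` with i.i.d. increments having finite
second moment and positive variance returns to its starting point infinitely often
almost surely. -/
theorem mean_zero_walk_recurrent (Ω : Type*) [MeasurableSpace Ω] (μ : Measure Ω)
    [IsProbabilityMeasure μ] (ξ : ℕ → Ω → ℤ) (hm : ∀ i, Measurable (ξ i))
    (hiid : iIndepFun ξ μ)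
    (hident : ∀ i, IdentDistrib (ξ i) (ξ 1) μ μ)
    (hint : Integrable (fun ω => (ξ 1 ω : ℝ)) μ)
    (hmean : ∫ ω, (ξ 1 ω : ℝ) ∂μ = 0)
    (hL2 : Integrable (fun ω => ((ξ 1 ω : ℝ)) ^ 2) μ)
    (hvar : 0 < ∫ ω, ((ξ 1 ω : ℝ)) ^ 2 ∂μ) :
    ∀ᵐ ω ∂μ, {n : ℕ | 1 ≤ n ∧ ∑ i ∈ Finset.Icc 1 n, ξ i ω = 0}.Infinite :=
  mean_zero_walk_recurrent_general Ω μ ξ hm hiid hident hmean hL2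
end
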